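/- Two-dimensional analogue of the orientation proposition: if u ∈ ℝ² satisfies ‖u‖ = 1 and J₂(v) ≤ J₂(u) for every v ∈ ℝ² with ‖v‖ = 1, then u ∈ {±e₁, ±e₂}, where e₁, e₂ is the standard basis of ℝ². -/

import Mathlib

open scoped RealInnerProductSpace

/-- The planar image-source grid `G₂`: points `(ε₁d₁ + 2q₁L₁, ε₂d₂ + 2q₂L₂)`
with `εᵢ ∈ {-1, 1}` and `qᵢ ∈ {0, …, Nᵢ/2 - 1}`. -/
noncomputable def grid2 (L d : Fin 2 → ℝ) (N : Fin 2 → ℕ) : Set (EuclideanSpace ℝ (Fin 2)) :=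
  {x | ∃ (ε : Fin 2 → ℝ) (q : Fin 2 → ℤ),
    (∀ i, ε i = 1 ∨ ε i = -1) ∧
    (∀ i, 0 ≤ q i ∧ q i < (N i / 2 : ℕ)) ∧
    (∀ i, x i = ε i * d i + 2 * (q i : ℝ) * L i)}

/-- The planar orthogonality score `J₂(u)`: the number of ordered pairs
`(s, p) ∈ G₂ × G₂` with `⟨u, s - p⟩ = 0`. -/
noncomputable def J2 (L d : Fin 2 → ℝ) (N : Fin 2 → ℕ) (u : EuclideanSpace ℝ (Fin 2)) : ℕ :=
  {sp : EuclideanSpace ℝ (Fin 2) × EuclideanSpace ℝ (Fin 2) |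
    sp.1 ∈ grid2 L d N ∧ sp.2 ∈ grid2 L d N ∧ ⟪u, sp.1 - sp.2⟫ = 0}.ncard

/-!
Write `G₂ = A × B`, where `A, B ⊂ ℝ` are the coordinate sets. Grouping the coordinates of a pair
`(s, p)` by axis, `J₂(u)` counts the quadruples with `u₀ (s₀ - p₀) + u₁ (s₁ - p₁) = 0`. For `u = e₂`
the condition is `s₁ = p₁`, which gives `|A|² |B|` pairs. If `u₀ u₁ ≠ 0`, then fixing `(s₀, p₀)`
forces `s₁ - p₁` to be one constant `c`; a difference `c` is realised by at most `|B|` pairs of `B`,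
and by strictly fewer when `c ≠ 0`, because an extreme element `b` of `B` has `b - c ∉ B`. Choosing
`s₀ ≠ p₀` (e.g. `±d₀`) gives `J₂(u) < J₂(e₂)`, so a maximizer has a vanishing coordinate and, being
a unit vector, is `±eᵢ`.
-/

open Finset

section Differences

variable {G : Type*}

lemma injOn_fst_of_sub_eq [AddGroup G] (s : Set (G × G)) (c : G)
    (hs : ∀ x ∈ s, x.1 - x.2 = c) : Set.InjOn Prod.fst s := fun x hx y hy hxy =>
  Prod.ext hxy <| sub_right_injective (b := x.1) <| by
    simp only
    rw [hs x hx, hxy, hs y hy]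

lemma exists_mem_sub_notMem [AddCommGroup G] [LinearOrder G] [IsOrderedAddMonoid G]
    {B : Finset G} (hB : B.Nonempty) {c : G} (hc : c ≠ 0) : ∃ b ∈ B, b - c ∉ B := by
  rcases hc.lt_or_gt with hc | hc
  · refine ⟨B.max' hB, B.max'_mem hB, fun h => ?_⟩
    exact (sub_le_self_iff _).1 (B.le_max' _ h) |>.not_gt hc
  · refine ⟨B.min' hB, B.min'_mem hB, fun h => ?_⟩
    exact (le_sub_self_iff _).1 (B.min'_le _ h) |>.not_gt hc

lemma card_filter_sub_eq_zero [AddGroup G] [DecidableEq G] (B : Finset G) :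
    #{x ∈ B ×ˢ B | x.1 - x.2 = 0} = #B := by
  rw [← diag_card B]
  congr 1
  ext x
  simp only [mem_filter, mem_product, mem_diag, sub_eq_zero]
  grind

lemma card_filter_sub_eq_le [AddGroup G] [DecidableEq G] (B : Finset G) (c : G) :
    #{x ∈ B ×ˢ B | x.1 - x.2 = c} ≤ #B :=
  card_le_card_of_injOn Prod.fst (fun _ hx => (mem_product.1 (mem_filter.1 hx).1).1)
    (injOn_fst_of_sub_eq _ c fun _ hx => (mem_filter.1 hx).2)

lemma card_filter_sub_eq_lt [AddCommGroup G] [LinearOrder G] [IsOrderedAddMonoid G]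
    {B : Finset G} (hB : B.Nonempty) {c : G} (hc : c ≠ 0) :
    #{x ∈ B ×ˢ B | x.1 - x.2 = c} < #B := by
  obtain ⟨b, hb, hbc⟩ := exists_mem_sub_notMem hB hc
  refine lt_of_le_of_lt (card_le_card_of_injOn Prod.fst (t := B.erase b) ?_
    (injOn_fst_of_sub_eq _ c fun _ hx => (mem_filter.1 hx).2)) (card_erase_lt_of_mem hb)
  intro x hx
  obtain ⟨hxB, hxc⟩ := mem_filter.1 hx
  refine mem_erase.2 ⟨fun hxb => hbc ?_, (mem_product.1 hxB).1⟩
  rw [← hxb, ← hxc, sub_sub_cancel]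
  exact (mem_product.1 hxB).2

end Differences

section ProductGrid

variable {K : Type*} [Field K]

/-- Counts the pairs `(s, p)` of points of `A ×ˢ B` with `u₀ (s₀ - p₀) + u₁ (s₁ - p₁) = 0`,
recording each pair by axis as `((s₀, p₀), (s₁, p₁))`. -/
def orthPairCount [DecidableEq K] (A B : Finset K) (u₀ u₁ : K) : ℕ :=
  #{x ∈ (A ×ˢ A) ×ˢ (B ×ˢ B) | u₀ * (x.1.1 - x.1.2) + u₁ * (x.2.1 - x.2.2) = 0}

lemma orthPairCount_eq_sum [DecidableEq K] (A B : Finset K) (u₀ u₁ : K) :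
    orthPairCount A B u₀ u₁ =
      ∑ a ∈ A ×ˢ A, #{b ∈ B ×ˢ B | u₀ * (a.1 - a.2) + u₁ * (b.1 - b.2) = 0} := by
  simp only [orthPairCount, card_filter, sum_product]

lemma card_filter_add_mul_sub_eq_zero [DecidableEq K] (B : Finset K) (t : K) {u₁ : K}
    (hu₁ : u₁ ≠ 0) :
    #{b ∈ B ×ˢ B | t + u₁ * (b.1 - b.2) = 0} = #{b ∈ B ×ˢ B | b.1 - b.2 = -t / u₁} := by
  congr 1
  refine filter_congr fun b _ => ?_
  rw [eq_div_iff hu₁]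
  constructor <;> intro h <;> linear_combination h

lemma orthPairCount_zero_one [DecidableEq K] (A B : Finset K) :
    orthPairCount A B 0 1 = #A * #A * #B := by
  simp only [orthPairCount_eq_sum, zero_mul, zero_add, one_mul, card_filter_sub_eq_zero,
    sum_const, card_product, smul_eq_mul]

lemma orthPairCount_lt [LinearOrder K] [IsStrictOrderedRing K] {A B : Finset K} (hA : 1 < #A)
    (hB : B.Nonempty) {u₀ u₁ : K} (hu₀ : u₀ ≠ 0) (hu₁ : u₁ ≠ 0) :
    orthPairCount A B u₀ u₁ < #A * #A * #B := by
  obtain ⟨a, ha, a', ha', hne⟩ := one_lt_card.1 hA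
  rw [orthPairCount_eq_sum, ← card_product, ← smul_eq_mul, ← sum_const]
  refine sum_lt_sum (fun x _ => ?_) ⟨(a, a'), mem_product.2 ⟨ha, ha'⟩, ?_⟩ <;>
    rw [card_filter_add_mul_sub_eq_zero _ _ hu₁]
  · exact card_filter_sub_eq_le B _
  · refine card_filter_sub_eq_lt hB (div_ne_zero (neg_ne_zero.2 ?_) hu₁)
    exact mul_ne_zero hu₀ (sub_ne_zero.2 hne)

end ProductGrid

section ImageSourceGrid

variable {L d : Fin 2 → ℝ} {N : Fin 2 → ℕ}

noncomputable def gridAxis (L d : Fin 2 → ℝ) (N : Fin 2 → ℕ) (i : Fin 2) : Finset ℝ :=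
  (({1, -1} : Finset ℝ) ×ˢ Ico (0 : ℤ) (N i / 2 : ℕ)).image
    fun p => p.1 * d i + 2 * (p.2 : ℝ) * L i

lemma mem_gridAxis {i : Fin 2} {y : ℝ} :
    y ∈ gridAxis L d N i ↔ ∃ (ε : ℝ) (q : ℤ), (ε = 1 ∨ ε = -1) ∧
      (0 ≤ q ∧ q < (N i / 2 : ℕ)) ∧ y = ε * d i + 2 * (q : ℝ) * L i := by
  simp only [gridAxis, mem_image, mem_product, mem_insert, mem_singleton, mem_Ico]
  constructor
  · rintro ⟨⟨ε, q⟩, ⟨hε, hq⟩, rfl⟩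
    exact ⟨ε, q, hε, hq, rfl⟩
  · rintro ⟨ε, q, hε, hq, rfl⟩
    exact ⟨(ε, q), ⟨hε, hq⟩, rfl⟩

lemma mem_grid2_iff {x : EuclideanSpace ℝ (Fin 2)} :
    x ∈ grid2 L d N ↔ ∀ i, x i ∈ gridAxis L d N i := by
  refine ⟨fun ⟨ε, q, hε, hq, hx⟩ i => mem_gridAxis.2 ⟨ε i, q i, hε i, hq i, hx i⟩, fun h => ?_⟩
  choose ε q hε hq hx using fun i => mem_gridAxis.1 (h i)
  exact ⟨ε, q, hε, hq, hx⟩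

lemma one_lt_card_gridAxis {i : Fin 2} (hd : d i ≠ 0) (hN : 2 ≤ N i) :
    1 < #(gridAxis L d N i) := by
  have hq : (0 : ℤ) < (N i / 2 : ℕ) := by omega
  refine one_lt_card.2 ⟨d i, mem_gridAxis.2 ⟨1, 0, .inl rfl, ⟨le_rfl, hq⟩, by ring⟩,
    -d i, mem_gridAxis.2 ⟨-1, 0, .inr rfl, ⟨le_rfl, hq⟩, by ring⟩, ?_⟩
  contrapose! hd
  linarith

lemma J2_eq_orthPairCount (u : EuclideanSpace ℝ (Fin 2)) :
    J2 L d N u = orthPairCount (gridAxis L d N 0) (gridAxis L d N 1) (u 0) (u 1) := by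
  let e : EuclideanSpace ℝ (Fin 2) ≃ ℝ × ℝ :=
    (EuclideanSpace.equiv (Fin 2) ℝ).toEquiv.trans (finTwoArrowEquiv ℝ)
  let Φ := (e.prodCongr e).trans (Equiv.prodProdProdComm ℝ ℝ ℝ ℝ)
  have hΦ : ∀ sp, Φ sp = ((sp.1 0, sp.2 0), (sp.1 1, sp.2 1)) := fun _ => rfl
  rw [J2, orthPairCount, ← Set.ncard_coe_finset,
    ← Set.ncard_preimage_of_injective_subset_range Φ.injective (by simp)]
  congr 1
  ext sp
  simp only [Set.mem_ofPred_eq, Set.mem_preimage, coe_filter, hΦ, mem_product, mem_grid2_iff,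
    Fin.forall_fin_two, PiLp.inner_apply, Fin.sum_univ_two, PiLp.sub_apply,
    RCLike.inner_apply, conj_trivial, mul_comm _ (u _)]
  tauto

end ImageSourceGrid

lemma EuclideanSpace.eq_single_or_eq_neg_single {ι : Type*} [Fintype ι] [DecidableEq ι]
    {u : EuclideanSpace ℝ ι} (hu : ‖u‖ = 1) {i : ι} (h : ∀ j ≠ i, u j = 0) :
    u = EuclideanSpace.single i 1 ∨ u = -EuclideanSpace.single i 1 := by
  have hu_eq : u = EuclideanSpace.single i (u i) := by
    ext j
    by_cases hj : j = i
    · simp [hj]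
    · simp [hj, h j hj]
  rw [hu_eq, PiLp.norm_single, Real.norm_eq_abs, abs_eq zero_le_one] at hu
  rcases hu with h1 | h1 <;> rw [hu_eq, h1]
  · exact .inl rfl
  · refine .inr (PiLp.ext fun j => ?_)
    by_cases hj : j = i <;> simp [hj]

theorem maximizer_is_wall_normal_2D_general (L d : Fin 2 → ℝ) (N : Fin 2 → ℕ)
    (hd : ∀ i, 0 < d i ∧ d i < L i)
    (hN : ∀ i, 0 < N i ∧ Even (N i))
    (u : EuclideanSpace ℝ (Fin 2)) (hu : ‖u‖ = 1)
    (hmax : ∀ v : EuclideanSpace ℝ (Fin 2), ‖v‖ = 1 → J2 L d N v ≤ J2 L d N u) :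
    ∃ i : Fin 2, u = EuclideanSpace.single i 1 ∨ u = -EuclideanSpace.single i 1 := by
  by_cases h₁ : u 1 = 0
  · exact ⟨0, EuclideanSpace.eq_single_or_eq_neg_single hu fun j hj => by
      rwa [Fin.eq_one_of_ne_zero j hj]⟩
  by_cases h₀ : u 0 = 0
  · exact ⟨1, EuclideanSpace.eq_single_or_eq_neg_single hu fun j hj => by
      rwa [show j = 0 by omega]⟩
  have hN₂ (i : Fin 2) : 2 ≤ N i := by
    obtain ⟨hpos, k, hk⟩ := hN i
    omega
  have hA := one_lt_card_gridAxis (L := L) (hd 0).1.ne' (hN₂ 0)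
  have hB := card_pos.1 (one_lt_card_gridAxis (L := L) (hd 1).1.ne' (hN₂ 1)).le
  have hle := hmax (EuclideanSpace.single 1 1) (by simp)
  simp only [J2_eq_orthPairCount, PiLp.single_apply, zero_ne_one, if_false, if_true] at hle
  rw [orthPairCount_zero_one] at hle
  exact absurd hle (orthPairCount_lt hA hB h₀ h₁).not_ge

/-- Two-dimensional orientation proposition: every maximizer of `J₂` over the unit circle
is a signed standard basis vector. -/
theorem maximizer_is_wall_normal_2D (L d : Fin 2 → ℝ) (N : Fin 2 → ℕ)
    (hL : ∀ i, 0 < L i) (hd : ∀ i, 0 < d i ∧ d i < L i)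
    (hN : ∀ i, 0 < N i ∧ Even (N i))
    (u : EuclideanSpace ℝ (Fin 2)) (hu : ‖u‖ = 1)
    (hmax : ∀ v : EuclideanSpace ℝ (Fin 2), ‖v‖ = 1 → J2 L d N v ≤ J2 L d N u) :
    ∃ i : Fin 2, u = EuclideanSpace.single i 1 ∨ u = -EuclideanSpace.single i 1 :=
  maximizer_is_wall_normal_2D_general L d N hd hN u hu hmax
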